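/- arXiv:0907.2059 — 3 statements merged into one kernel-verified Lean document; each statement's English description precedes it below -/
import Mathlib

section
/- If C is an evaluation context of Fx and M a term such that C[M] reduces to a value, then M itself reduces to a value. -/
/-- Exception names (a countable set, taken to be ℕ; the fixed bijection φ
with ℕ is the identity). -/
abbrev ExnName := ℕ

/-- Terms of Fx extended with the daimon ✠ and the test construction `M; N`. -/
inductive Tm : Type
  | var : ℕ → Tm
  | lam : Tm → Tm
  | app : Tm → Tm → Tm
  | raise : ExnName → Tm
  | tryc : Tm → ExnName → Tm → Tm
  | zero : Tm
  | succ : Tm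
  | natrec : Tm
  | nil : Tm
  | cons : Tm
  | foldr : Tm
  | daimon : Tm
  | seq : Tm → Tm → Tm
  deriving DecidableEq

namespace Tm

/-- Shifting of de Bruijn indices ≥ k. -/
def lift : ℕ → Tm → Tm
  | k, var i => if i < k then var i else var (i + 1)
  | k, lam M => lam (lift (k + 1) M)
  | k, app M N => app (lift k M) (lift k N)
  | k, tryc M e N => tryc (lift k M) e (lift k N)
  | k, seq M N => seq (lift k M) (lift k N)
  | _, raise e => raise e
  | _, zero => zero
  | _, succ => succ
  | _, natrec => natrec
  | _, nil => nil
  | _, cons => cons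
  | _, foldr => foldr
  | _, daimon => daimon

/-- Capture-avoiding substitution `M[k := N]` (de Bruijn). -/
def subst : ℕ → Tm → Tm → Tm
  | k, N, var i => if i = k then N else if k < i then var (i - 1) else var i
  | k, N, lam M => lam (subst (k + 1) (lift 0 N) M)
  | k, N, app M P => app (subst k N M) (subst k N P)
  | k, N, tryc M e P => tryc (subst k N M) e (subst k N P)
  | k, N, seq M P => seq (subst k N M) (subst k N P)
  | _, _, raise e => raise e
  | _, _, zero => zero
  | _, _, succ => succ
  | _, _, natrec => natrec
  | _, _, nil => nil
  | _, _, cons => cons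
  | _, _, foldr => foldr
  | _, _, daimon => daimon

end Tm

open Tm

/-- Regular values of Fx. -/
inductive RegVal : Tm → Prop
  | lam (M) : RegVal (lam M)
  | zero : RegVal zero
  | succ : RegVal succ
  | succApp (N) : RegVal (app succ N)
  | natrec : RegVal natrec
  | natrec1 (M) : RegVal (app natrec M)
  | natrec2 (M N) : RegVal (app (app natrec M) N)
  | nil : RegVal nil
  | cons : RegVal cons
  | cons1 (M) : RegVal (app cons M)
  | cons2 (M N) : RegVal (app (app cons M) N)
  | foldr : RegVal foldr
  | foldr1 (M) : RegVal (app foldr M)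
  | foldr2 (M N) : RegVal (app (app foldr M) N)

/-- Values: regular values, exceptions and the daimon. -/
def IsVal (V : Tm) : Prop := RegVal V ∨ (∃ e, V = raise e) ∨ V = daimon

/-- The notion of reduction ▷ of Fx extended with the daimon rules. -/
inductive Head : Tm → Tm → Prop
  | beta (M N) : Head (app (lam M) N) (subst 0 N M)
  | raiseApp (e M) : Head (app (raise e) M) (raise e)
  | tryCatch (e N) : Head (tryc (raise e) e N) N
  | tryOther (e e' N) : e ≠ e' → Head (tryc (raise e') e N) (raise e')
  | tryVal (V e N) : RegVal V → Head (tryc V e N) V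
  | recZero (X Y) : Head (app (app (app natrec X) Y) zero) X
  | recSucc (X Y N) :
      Head (app (app (app natrec X) Y) (app succ N))
        (app (app Y N) (app (app (app natrec X) Y) N))
  | recRaise (X Y e) : Head (app (app (app natrec X) Y) (raise e)) (raise e)
  | foldNil (X Y) : Head (app (app (app foldr X) Y) nil) X
  | foldCons (X Y E L) :
      Head (app (app (app foldr X) Y) (app (app cons E) L))
        (app (app (app Y E) L) (app (app (app foldr X) Y) L))
  | foldRaise (X Y e) : Head (app (app (app foldr X) Y) (raise e)) (raise e)
  | daimonApp (N) : Head (app daimon N) daimon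
  | tryDaimon (e N) : Head (tryc daimon e N) daimon
  | recDaimon (X Y) : Head (app (app (app natrec X) Y) daimon) daimon
  | foldDaimon (X Y) : Head (app (app (app foldr X) Y) daimon) daimon
  | seqDaimon (N) : Head (seq daimon N) N

/-- One-step reduction: compatible closure of ▷. -/
inductive Red : Tm → Tm → Prop
  | head {M N} : Head M N → Red M N
  | appL {M M' N} : Red M M' → Red (app M N) (app M' N)
  | appR {M N N'} : Red N N' → Red (app M N) (app M N')
  | lam {M M'} : Red M M' → Red (lam M) (lam M')
  | tryL {M M' e N} : Red M M' → Red (tryc M e N) (tryc M' e N)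
  | tryR {M e N N'} : Red N N' → Red (tryc M e N) (tryc M e N')
  | seqL {M M' N} : Red M M' → Red (seq M N) (seq M' N)
  | seqR {M N N'} : Red N N' → Red (seq M N) (seq M N')

/-- Many-step reduction. -/
abbrev RedStar : Tm → Tm → Prop := Relation.ReflTransGen Red

/-- Evaluation contexts of Fx. -/
inductive Ctx : Type
  | hole : Ctx
  | appl : Ctx → Tm → Ctx
  | tryd : Ctx → ExnName → Ctx
  | recd : Tm → Tm → Ctx → Ctx
  | foldd : Tm → Tm → Ctx → Ctx

namespace Ctx

/-- Filling the hole of a context with a term. -/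
def fill : Ctx → Tm → Tm
  | hole, M => M
  | appl C N, M => Tm.app (fill C M) N
  | tryd C e, M => Tm.tryc (fill C M) e Tm.daimon
  | recd X Y C, M => Tm.app (Tm.app (Tm.app Tm.natrec X) Y) (fill C M)
  | foldd X Y C, M => Tm.app (Tm.app (Tm.app Tm.foldr X) Y) (fill C M)

/-- Composition of contexts: `(C.comp D)[M] = C[D[M]]`. -/
def comp : Ctx → Ctx → Ctx
  | hole, D => D
  | appl C N, D => appl (comp C D) N
  | tryd C e, D => tryd (comp C D) e
  | recd X Y C, D => recd X Y (comp C D)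
  | foldd X Y C, D => foldd X Y (comp C D)

end Ctx

/-- Orthogonality: `M ⊥ C` iff `C[M] →* ✠`. -/
def Perp (M : Tm) (C : Ctx) : Prop := RedStar (C.fill M) Tm.daimon

/-- The orthogonal of a set of contexts. -/
def orth (S : Set Ctx) : Set Tm := { M | ∀ C ∈ S, Perp M C }

/-- `tryCtx Δ` is the context `try (… (try □ with ε₁ ↦ ✠) …) with εₙ ↦ ✠`,
for `Δ = {ε₁, …, εₙ}` enumerated in the order given by the fixed bijection
with ℕ (ε₁ innermost); it is the empty context when `Δ = ∅`. -/
def tryCtx (Δ : Finset ExnName) : Ctx := (Δ.sort (· ≤ ·)).foldl Ctx.tryd Ctx.hole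

/-- `lift_Δ(S)`: wrap each context of `S` inside the `try_Δ` handlers
(the handlers outermost). -/
def liftS (Δ : Finset ExnName) (S : Set Ctx) : Set Ctx :=
  (fun C => (tryCtx Δ).comp C) '' S

/-- `unlift_Δ(S)`: plug the `try_Δ` handlers inside each context of `S`. -/
def unliftS (Δ : Finset ExnName) (S : Set Ctx) : Set Ctx :=
  (fun C => C.comp (tryCtx Δ)) '' S

/-!
An evaluation context inspects the term in its hole only once that term is a value: a step of
`C[M]` is a step of `M`, a step inside a side argument of `C` (leaving `M` alone), or a head
reduction that can only fire because `M` is a value. Hence along a reduction of `C[M]` the term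
stays of the form `C'[M']` with `M →* M'` until `M'` is a value, and if `C'[M']` is itself a
value then so is `M'`.
-/

def HasVal (M : Tm) : Prop := ∃ W, IsVal W ∧ RedStar M W

theorem IsVal.hasVal {M : Tm} (h : IsVal M) : HasVal M := ⟨M, h, .refl⟩

theorem HasVal.of_redStar {M M' : Tm} (hM : RedStar M M') (h : HasVal M') : HasVal M :=
  let ⟨W, hW, hM'W⟩ := h
  ⟨W, hW, hM.trans hM'W⟩

theorem RegVal.isVal {V : Tm} (h : RegVal V) : IsVal V := Or.inl h

theorem isVal_raise (e : ExnName) : IsVal (raise e) := Or.inr (Or.inl ⟨e, rfl⟩)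

theorem isVal_daimon : IsVal daimon := Or.inr (Or.inr rfl)

theorem RegVal.of_app {A N : Tm} (h : RegVal (app A N)) : RegVal A := by
  cases h <;> constructor

theorem IsVal.of_app {A N : Tm} (h : IsVal (app A N)) : IsVal A := by
  rcases h with h | ⟨_, h⟩ | h
  · exact h.of_app.isVal
  all_goals cases h

theorem not_isVal_tryc (A : Tm) (e : ExnName) (N : Tm) : ¬ IsVal (tryc A e N) := by
  rintro (h | ⟨_, h⟩ | h) <;> cases h

theorem not_isVal_app_app_app (c X Y A : Tm) : ¬ IsVal (app (app (app c X) Y) A) := by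
  rintro (h | ⟨_, h⟩ | h) <;> cases h

theorem IsVal.of_fill : ∀ {C : Ctx} {M : Tm}, IsVal (C.fill M) → IsVal M
  | .hole, _, h => h
  | .appl _ _, _, h => of_fill (IsVal.of_app h)
  | .tryd _ _, _, h => absurd h (not_isVal_tryc _ _ _)
  | .recd _ _ _, _, h | .foldd _ _ _, _, h => absurd h (not_isVal_app_app_app _ _ _ _)

theorem Head.isVal_fun {A N P : Tm} (h : Head (app A N) P) : IsVal A := by
  cases h <;> first | exact isVal_raise _ | exact isVal_daimon | exact RegVal.isVal (by constructor)

theorem Head.isVal_tryc {A N P : Tm} {e : ExnName} (h : Head (tryc A e N) P) : IsVal A := by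
  cases h <;> first | exact isVal_raise _ | exact isVal_daimon | exact RegVal.isVal (by assumption)

theorem Head.isVal_iter_arg {c X Y A P : Tm} (h : Head (app (app (app c X) Y) A) P) : IsVal A := by
  cases h <;> first | exact isVal_raise _ | exact isVal_daimon | exact RegVal.isVal (by constructor)

theorem Head.isVal_of_fill {C : Ctx} {M P : Tm} (hC : C ≠ .hole) (h : Head (C.fill M) P) :
    IsVal M := by
  cases C with
  | hole => contradiction
  | appl => exact h.isVal_fun.of_fill
  | tryd => exact h.isVal_tryc.of_fill
  | recd | foldd => exact h.isVal_iter_arg.of_fill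

theorem Red.eq_app_app_of_iterator {c X Y Q : Tm} (hc : c = natrec ∨ c = foldr)
    (h : Red (app (app c X) Y) Q) : ∃ X' Y', Q = app (app c X') Y' := by
  rcases hc with rfl | rfl <;>
    rcases h with ⟨⟨⟩⟩ | ⟨⟨⟨⟩⟩ | ⟨⟨⟨⟩⟩ | _ | _⟩ | _⟩ | _ <;> exact ⟨_, _, rfl⟩

theorem Red.fill_cases {C : Ctx} {M P : Tm} (h : Red (C.fill M) P) :
    IsVal M ∨ ∃ (C' : Ctx) (M' : Tm), P = C'.fill M' ∧ RedStar M M' := by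
  induction C generalizing P with
  | hole => exact .inr ⟨.hole, P, rfl, .single h⟩
  | appl C N ih =>
    cases h with
    | head h => exact .inl (h.isVal_of_fill (C := .appl C N) nofun)
    | appL h =>
      exact (ih h).imp_right fun ⟨C', M', hP, hM⟩ => ⟨.appl C' N, M', hP ▸ rfl, hM⟩
    | appR _ => exact .inr ⟨.appl C _, M, rfl, .refl⟩
  | tryd C e ih =>
    cases h with
    | head h => exact .inl (h.isVal_of_fill (C := .tryd C e) nofun)
    | tryL h =>
      exact (ih h).imp_right fun ⟨C', M', hP, hM⟩ => ⟨.tryd C' e, M', hP ▸ rfl, hM⟩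
    | tryR h => cases h with | head h => cases h
  | recd X Y C ih =>
    cases h with
    | head h => exact .inl (h.isVal_of_fill (C := .recd X Y C) nofun)
    | appL h =>
      obtain ⟨X', Y', rfl⟩ := h.eq_app_app_of_iterator (.inl rfl)
      exact .inr ⟨.recd X' Y' C, M, rfl, .refl⟩
    | appR h =>
      exact (ih h).imp_right fun ⟨C', M', hP, hM⟩ => ⟨.recd X Y C', M', hP ▸ rfl, hM⟩
  | foldd X Y C ih =>
    cases h with
    | head h => exact .inl (h.isVal_of_fill (C := .foldd X Y C) nofun)
    | appL h =>
      obtain ⟨X', Y', rfl⟩ := h.eq_app_app_of_iterator (.inr rfl)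
      exact .inr ⟨.foldd X' Y' C, M, rfl, .refl⟩
    | appR h =>
      exact (ih h).imp_right fun ⟨C', M', hP, hM⟩ => ⟨.foldd X Y C', M', hP ▸ rfl, hM⟩

/-- If `C[M]` reduces to a value, then `M` reduces to a value. -/
theorem value_of_fill_value (C : Ctx) (M : Tm)
    (h : ∃ V, IsVal V ∧ RedStar (C.fill M) V) : ∃ W, IsVal W ∧ RedStar M W := by
  obtain ⟨V, hV, hred⟩ := h
  generalize hA : C.fill M = A at hred
  induction hred using Relation.ReflTransGen.head_induction_on generalizing C M with
  | refl => exact (hA ▸ hV).of_fill.hasVal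
  | head hstep _ ih =>
    subst hA
    rcases hstep.fill_cases with hM | ⟨C', M', rfl, hM⟩
    · exact hM.hasVal
    · exact HasVal.of_redStar hM (ih C' M' rfl)
end

section
/- Lifting lemma: for any set S of contexts and finite sets Δ, Δ' of exception names, (lift_Δ(lift_{Δ'}(S)))^⊥ = (lift_{Δ∪Δ'}(S))^⊥, where lift_Δ(S) = { try_Δ(C) | C ∈ S } wraps each context in the try-handlers for all exceptions in Δ with handler ✠. -/
open Tm

/-!
A handler `try □ with ε ↦ ✠` turns `M` into a term reaching ✠ exactly when `M` reaches ✠ or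
`raise ε`, and lets `raise f` through exactly when `f ≠ ε` (a regular value never turns into an
exception, so nothing else can happen). Hence `C[M]` wrapped in `try_Δ` reaches ✠ iff `C[M]`
reaches ✠ or raises some `ε ∈ Δ`. Wrapping first in `try_Δ'` and then in `try_Δ` therefore
catches the exceptions of `Δ'` directly and those of `Δ \ Δ'` after they escape `try_Δ'`, i.e.
exactly those of `Δ ∪ Δ'`; the two lifted sets thus have the same orthogonal, context by context.
-/

theorem not_red_daimon (W : Tm) : ¬Red daimon W := by
  rintro (⟨⟨⟩⟩)

theorem not_red_raise (e : ExnName) (W : Tm) : ¬Red (raise e) W := by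
  rintro (⟨⟨⟩⟩)

theorem eq_of_redStar_daimon {W : Tm} (h : RedStar daimon W) : W = daimon := by
  induction h with
  | refl => rfl
  | tail _ h ih => subst ih; exact (not_red_daimon _ h).elim

theorem eq_of_redStar_raise {e : ExnName} {W : Tm} (h : RedStar (raise e) W) : W = raise e := by
  induction h with
  | refl => rfl
  | tail _ h ih => subst ih; exact (not_red_raise _ _ h).elim

theorem RegVal.red {V W : Tm} (hV : RegVal V) (h : Red V W) : RegVal W := by
  cases hV <;> cases h <;> repeat (first | constructor | cases ‹Head _ _› | cases ‹Red _ _›)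

theorem RegVal.redStar {V W : Tm} (hV : RegVal V) (h : RedStar V W) : RegVal W := by
  induction h with
  | refl => exact hV
  | tail _ h ih => exact ih.red h

theorem redStar_tryc_left {M M' : Tm} (e : ExnName) (N : Tm) (h : RedStar M M') :
    RedStar (tryc M e N) (tryc M' e N) :=
  h.lift (fun t => tryc t e N) fun _ _ => Red.tryL

theorem redStar_tryc_daimon_iff {M : Tm} {e : ExnName} :
    RedStar (tryc M e daimon) daimon ↔ RedStar M daimon ∨ RedStar M (raise e) := by
  refine ⟨fun h => ?_, ?_⟩
  · generalize hT : tryc M e daimon = T at h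
    induction h using Relation.ReflTransGen.head_induction_on generalizing M with
    | refl => cases hT
    | head step rest ih =>
      subst hT
      cases step with
      | head step =>
        cases step with
        | tryCatch => exact .inr .refl
        | tryOther => cases eq_of_redStar_raise rest
        | tryVal => exact .inl rest
        | tryDaimon => exact .inl .refl
      | tryL step => exact (ih rfl).imp (.head step) (.head step)
      | tryR step => exact (not_red_daimon _ step).elim
  · rintro (h | h)
    · exact (redStar_tryc_left e _ h).tail (.head (.tryDaimon e daimon))
    · exact (redStar_tryc_left e _ h).tail (.head (.tryCatch e daimon))

theorem redStar_tryc_raise_iff {M : Tm} {e f : ExnName} :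
    RedStar (tryc M e daimon) (raise f) ↔ RedStar M (raise f) ∧ f ≠ e := by
  refine ⟨fun h => ?_, fun ⟨h, hfe⟩ => ?_⟩
  · generalize hT : tryc M e daimon = T at h
    induction h using Relation.ReflTransGen.head_induction_on generalizing M with
    | refl => cases hT
    | head step rest ih =>
      subst hT
      cases step with
      | head step =>
        cases step with
        | tryCatch => cases eq_of_redStar_daimon rest
        | tryOther _ _ _ hne =>
          cases eq_of_redStar_raise rest
          exact ⟨.refl, Ne.symm hne⟩
        | tryVal _ _ _ hV => cases hV.redStar rest
        | tryDaimon => cases eq_of_redStar_daimon rest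
      | tryL step => exact (ih rfl).imp_left (.head step)
      | tryR step => exact (not_red_daimon _ step).elim
  · exact (redStar_tryc_left e _ h).tail (.head (.tryOther e f _ (Ne.symm hfe)))

def tryAll (l : List ExnName) (P : Tm) : Tm :=
  l.foldl (fun t e => tryc t e daimon) P

theorem tryAll_cons (e : ExnName) (l : List ExnName) (P : Tm) :
    tryAll (e :: l) P = tryAll l (tryc P e daimon) :=
  rfl

theorem redStar_tryAll_raise_iff (l : List ExnName) (P : Tm) (f : ExnName) :
    RedStar (tryAll l P) (raise f) ↔ RedStar P (raise f) ∧ f ∉ l := by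
  induction l generalizing P with
  | nil => simp [tryAll]
  | cons e l ih =>
    rw [tryAll_cons, ih, redStar_tryc_raise_iff, List.mem_cons, not_or, and_assoc]

theorem redStar_tryAll_daimon_iff (l : List ExnName) (P : Tm) :
    RedStar (tryAll l P) daimon ↔ RedStar P daimon ∨ ∃ e ∈ l, RedStar P (raise e) := by
  induction l generalizing P with
  | nil => simp [tryAll]
  | cons e l ih =>
    rw [tryAll_cons, ih, redStar_tryc_daimon_iff]
    simp only [redStar_tryc_raise_iff, List.mem_cons]
    grind

theorem Ctx.fill_comp (C D : Ctx) (M : Tm) : (C.comp D).fill M = C.fill (D.fill M) := by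
  induction C <;> simp [Ctx.comp, Ctx.fill, *]

theorem Ctx.fill_foldl_tryd (l : List ExnName) (C : Ctx) (P : Tm) :
    (l.foldl Ctx.tryd C).fill P = tryAll l (C.fill P) := by
  induction l generalizing C with
  | nil => rfl
  | cons e l ih => exact ih (C.tryd e)

theorem redStar_fill_tryCtx_daimon_iff (Δ : Finset ExnName) (P : Tm) :
    RedStar ((tryCtx Δ).fill P) daimon ↔ RedStar P daimon ∨ ∃ e ∈ Δ, RedStar P (raise e) := by
  rw [tryCtx, Ctx.fill_foldl_tryd, redStar_tryAll_daimon_iff]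
  simp only [Ctx.fill, Finset.mem_sort]

theorem redStar_fill_tryCtx_raise_iff (Δ : Finset ExnName) (P : Tm) (f : ExnName) :
    RedStar ((tryCtx Δ).fill P) (raise f) ↔ RedStar P (raise f) ∧ f ∉ Δ := by
  rw [tryCtx, Ctx.fill_foldl_tryd, redStar_tryAll_raise_iff]
  simp only [Ctx.fill, Finset.mem_sort]

theorem perp_tryCtx_comp_tryCtx_comp (M : Tm) (Δ Δ' : Finset ExnName) (C : Ctx) :
    Perp M ((tryCtx Δ).comp ((tryCtx Δ').comp C)) ↔ Perp M ((tryCtx (Δ ∪ Δ')).comp C) := by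
  simp only [Perp, Ctx.fill_comp, redStar_fill_tryCtx_daimon_iff, redStar_fill_tryCtx_raise_iff,
    Finset.mem_union]
  grind

/-- Lifting lemma: `(lift_Δ(lift_Δ'(S)))^⊥ = (lift_{Δ∪Δ'}(S))^⊥`. -/
theorem orth_lift_lift (S : Set Ctx) (Δ Δ' : Finset ExnName) :
    orth (liftS Δ (liftS Δ' S)) = orth (liftS (Δ ∪ Δ') S) := by
  ext M
  simp only [orth, liftS, Set.image_image, Set.mem_ofPred_eq, Set.forall_mem_image,
    perp_tryCtx_comp_tryCtx_comp]
end

section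
/- Exceptions inhabit corrupted types: for any type A, valuation ρ, finite set Δ of exception names, and ε ∈ Δ, the term raise ε belongs to ⟦{Δ}A⟧ρ. -/
open Tm

/-- Types of Fx; `union A Δ` is `A∪{Δ}`, `corrupt Δ A` is `{Δ}A`. -/
inductive Ty : Type
  | tvar : ℕ → Ty
  | nat : Ty
  | list : Ty → Ty
  | arrow : Ty → Ty → Ty
  | all : Ty → Ty
  | union : Ty → Finset ExnName → Ty
  | corrupt : Finset ExnName → Ty → Ty
  deriving DecidableEq

/-- Extension of a valuation by a set of contexts for the bound type
variable 0 (de Bruijn). -/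
def consVal (S : Set Ctx) (ρ : ℕ → Set Ctx) : ℕ → Set Ctx
  | 0 => S
  | i + 1 => ρ i

/-- The context interpretation `⟪A⟫ρ` of a type. -/
def CtxI : Ty → (ℕ → Set Ctx) → Set Ctx
  | .tvar i, ρ => ρ i
  | .nat, _ => {Ctx.recd Tm.daimon (Tm.lam (Tm.lam (Tm.var 0))) Ctx.hole}
  | .list A, ρ =>
      (fun C => Ctx.foldd Tm.daimon
        (Tm.lam (Tm.lam (Tm.lam (Tm.seq (Ctx.fill C (Tm.var 2)) (Tm.var 0)))))
        Ctx.hole) '' CtxI A ρ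
  | .arrow A B, ρ =>
      ⋃ (Δ : Finset ExnName),
        ⋃ N ∈ orth (liftS Δ (CtxI A ρ)), ⋃ C ∈ liftS Δ (CtxI B ρ),
          {Ctx.comp C (Ctx.appl Ctx.hole N)}
  | .all A, ρ => ⋃ (S : Set Ctx), ⋃ (_ : S.Nonempty), CtxI A (consVal S ρ)
  | .union A Δ, ρ => unliftS Δ (CtxI A ρ)
  | .corrupt Δ A, ρ => liftS Δ (CtxI A ρ)

/-- The term interpretation `⟦A⟧ρ = ⟪A⟫ρ^⊥`. -/
def TmI (A : Ty) (ρ : ℕ → Set Ctx) : Set Tm := orth (CtxI A ρ)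

/-! A raised exception travels through any evaluation context until it is caught by one of the
context's `✠`-handlers or reaches the top, so `D[raise ε]` reduces to `✠` or to `raise ε`.
The outer `try_Δ` handlers turn both outcomes into `✠`, the second one because `ε ∈ Δ`. -/

namespace Ctx

theorem fill_red (C : Ctx) {M N : Tm} (h : Red M N) : Red (C.fill M) (C.fill N) := by
  induction C with
  | hole => exact h
  | appl _ _ ih => exact Red.appL ih
  | tryd _ _ ih => exact Red.tryL ih
  | recd _ _ _ ih => exact Red.appR ih
  | foldd _ _ _ ih => exact Red.appR ih

theorem fill_redStar (C : Ctx) {M N : Tm} (h : RedStar M N) : RedStar (C.fill M) (C.fill N) :=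
  h.lift C.fill fun _ _ => C.fill_red

theorem fill_comp_s18 (C D : Ctx) (M : Tm) : (C.comp D).fill M = C.fill (D.fill M) := by
  induction C with
  | hole => rfl
  | appl _ _ ih | tryd _ _ ih | recd _ _ _ ih | foldd _ _ _ ih =>
    simp only [comp, fill, ih]

theorem fill_raise_redStar_raise_or_daimon (D : Ctx) (ε : ExnName) :
    RedStar (D.fill (raise ε)) (raise ε) ∨ RedStar (D.fill (raise ε)) daimon := by
  induction D with
  | hole => exact Or.inl .refl
  | appl D N ih =>
    rcases ih with h | h
    · exact Or.inl <| ((appl hole N).fill_redStar h).tail (.head (.raiseApp ε N))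
    · exact Or.inr <| ((appl hole N).fill_redStar h).tail (.head (.daimonApp N))
  | tryd D e ih =>
    rcases ih with h | h
    · by_cases he : e = ε
      · subst he
        exact Or.inr <| ((tryd hole e).fill_redStar h).tail (.head (.tryCatch e daimon))
      · exact Or.inl <| ((tryd hole e).fill_redStar h).tail (.head (.tryOther e ε daimon he))
    · exact Or.inr <| ((tryd hole e).fill_redStar h).tail (.head (.tryDaimon e daimon))
  | recd X Y D ih =>
    rcases ih with h | h
    · exact Or.inl <| ((recd X Y hole).fill_redStar h).tail (.head (.recRaise X Y ε))
    · exact Or.inr <| ((recd X Y hole).fill_redStar h).tail (.head (.recDaimon X Y))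
  | foldd X Y D ih =>
    rcases ih with h | h
    · exact Or.inl <| ((foldd X Y hole).fill_redStar h).tail (.head (.foldRaise X Y ε))
    · exact Or.inr <| ((foldd X Y hole).fill_redStar h).tail (.head (.foldDaimon X Y))

theorem foldl_tryd_fill_redStar_daimon (l : List ExnName) (C : Ctx) (M : Tm)
    (h : RedStar (C.fill M) daimon ∨ ∃ e ∈ l, RedStar (C.fill M) (raise e)) :
    RedStar ((l.foldl tryd C).fill M) daimon := by
  induction l generalizing C with
  | nil => simpa using h
  | cons a l ih =>
    apply ih (tryd C a)
    have hframe := fun {N} (hN : RedStar (C.fill M) N) => (tryd hole a).fill_redStar hN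
    rcases h with h | ⟨e, he, h⟩
    · exact Or.inl <| (hframe h).tail (.head (.tryDaimon a daimon))
    · by_cases hea : a = e
      · subst hea
        exact Or.inl <| (hframe h).tail (.head (.tryCatch a daimon))
      · exact Or.inr ⟨e, (List.mem_cons.mp he).resolve_left (Ne.symm hea),
          (hframe h).tail (.head (.tryOther a e daimon hea))⟩

end Ctx

theorem tryCtx_fill_redStar_daimon {Δ : Finset ExnName} {ε : ExnName} (hε : ε ∈ Δ) {M : Tm}
    (h : RedStar M (raise ε) ∨ RedStar M daimon) : RedStar ((tryCtx Δ).fill M) daimon :=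
  Ctx.foldl_tryd_fill_redStar_daimon _ .hole M <|
    h.symm.imp id fun h => ⟨ε, (Finset.mem_sort _).mpr hε, h⟩

theorem raise_mem_tmI_corrupt_general (A : Ty) (ρ : ℕ → Set Ctx)
    (Δ : Finset ExnName) (ε : ExnName) (hε : ε ∈ Δ) :
    Tm.raise ε ∈ TmI (Ty.corrupt Δ A) ρ := by
  rintro _ ⟨D, -, rfl⟩
  rw [Perp, Ctx.fill_comp_s18]
  exact tryCtx_fill_redStar_daimon hε (D.fill_raise_redStar_raise_or_daimon ε)

/-- Exceptions inhabit corrupted types: `raise ε ∈ ⟦{Δ}A⟧ρ` for `ε ∈ Δ`. -/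
theorem raise_mem_tmI_corrupt (A : Ty) (ρ : ℕ → Set Ctx)
    (hρ : ∀ i, (ρ i).Nonempty) (Δ : Finset ExnName) (ε : ExnName) (hε : ε ∈ Δ) :
    Tm.raise ε ∈ TmI (Ty.corrupt Δ A) ρ :=
  raise_mem_tmI_corrupt_general A ρ Δ ε hε
end
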